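/- arXiv:1507.03396 — 2 statements merged into one kernel-verified Lean document; each statement's English description precedes it below -/
import Mathlib

section
/- If Y is a closed subset of a topological space X and R is a closed equivalence relation on Y (with its subspace topology), then the equivalence relation R̄ := R ∪ id_X on X (which identifies two points iff they are equal or both lie in Y and are R-related) is a closed equivalence relation on X. -/
/-! A set is closed in the quotient by `R̄` iff its preimage is closed, so it suffices that the
`R̄`-saturation of a closed `C ⊆ X` is closed. That saturation is `C` together with the
`R`-saturation of `C ∩ Y`, which is closed in `Y` because `R` is closed, hence closed in `X`
because `Y` is. -/

theorem Topology.IsQuotientMap.isClosedMap_iff {X Z : Type*} [TopologicalSpace X]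
    [TopologicalSpace Z] {f : X → Z} (hf : IsQuotientMap f) :
    IsClosedMap f ↔ ∀ C : Set X, IsClosed C → IsClosed (f ⁻¹' (f '' C)) :=
  forall₂_congr fun _ _ ↦ hf.isClosed_preimage.symm

theorem preimage_image_mk_eq_union_saturation {X : Type*} {Y : Set X} (R : Setoid Y)
    (S : Setoid X) (hS : ∀ x y : X, S.r x y ↔
      x = y ∨ ∃ (hx : x ∈ Y) (hy : y ∈ Y), R.r ⟨x, hx⟩ ⟨y, hy⟩) (C : Set X) :
    Quotient.mk S ⁻¹' (Quotient.mk S '' C) =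
      C ∪ Subtype.val '' (Quotient.mk R ⁻¹' (Quotient.mk R '' (Subtype.val ⁻¹' C))) := by
  ext x
  constructor
  · rintro ⟨c, hc, hcx⟩
    rcases (hS c x).mp (Quotient.exact hcx) with rfl | ⟨hcY, hxY, hcx⟩
    · exact Or.inl hc
    · exact Or.inr ⟨⟨x, hxY⟩, ⟨⟨c, hcY⟩, hc, Quotient.sound hcx⟩, rfl⟩
  · rintro (hx | ⟨⟨x, hxY⟩, ⟨⟨c, hcY⟩, hc, hcx⟩, rfl⟩)
    · exact ⟨x, hx, rfl⟩
    · exact ⟨c, hc, Quotient.sound ((hS c x).mpr (Or.inr ⟨hcY, hxY, Quotient.exact hcx⟩))⟩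

/-- If `Y ⊆ X` is closed and `R` is a closed equivalence relation on `Y`
(subspace topology), then `R̄ = R ∪ id_X` is a closed equivalence relation on `X`. -/
theorem isClosedMap_quotient_extension {X : Type*} [TopologicalSpace X]
    {Y : Set X} (hY : IsClosed Y)
    (R : Setoid Y) (hR : IsClosedMap (Quotient.mk R))
    (S : Setoid X)
    (hS : ∀ x y : X, S.r x y ↔
      x = y ∨ ∃ (hx : x ∈ Y) (hy : y ∈ Y), R.r ⟨x, hx⟩ ⟨y, hy⟩) :
    IsClosedMap (Quotient.mk S) := by
  have hmk : Topology.IsQuotientMap (Quotient.mk S) := isQuotientMap_quotient_mk'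
  refine hmk.isClosedMap_iff.mpr fun C hC ↦ ?_
  rw [preimage_image_mk_eq_union_saturation R S hS C]
  have hCY : IsClosed (Subtype.val ⁻¹' C : Set Y) := hC.preimage continuous_subtype_val
  have hsatY : IsClosed (Quotient.mk R ⁻¹' (Quotient.mk R '' (Subtype.val ⁻¹' C))) :=
    (hR _ hCY).preimage continuous_quotient_mk'
  exact hC.union (hY.isClosedEmbedding_subtypeVal.isClosedMap _ hsatY)
end

section
/- Let X₁ and X₂ be topological spaces and h : X₁ → X₂ a homotopy equivalence. If f₁ : S^{n-1} → X₁ and f₂ : S^{n-1} → X₂ are continuous maps with f₂ = h ∘ f₁, then the adjunction spaces X₁ ∪_{f₁} B^n and X₂ ∪_{f₂} B^n (obtained by gluing an n-cell along f₁ and f₂ respectively) are homotopy equivalent. -/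
/-!
`attachMap k f : X ∪_f Bⁿ → Y ∪_{k ∘ f} Bⁿ` is `k` on `X` and the identity on the cell. A
homotopy `J : f₀ ≃ f₁` of attaching maps gives `collarMap J`, which shrinks the cell to radius
`1/2` and spreads `J` over the collar `1/2 ≤ ‖b‖ ≤ 1`; since a path followed by its reverse
contracts, `collarMap J.symm` is a left homotopy inverse of `collarMap J`. If `H : k' ∘ k ≃ id`,
letting the inner radius grow back to `1` while running `H` shows that
`collarMap (H ∘ f) ∘ attachMap k'` is a left homotopy inverse of `attachMap k`. Applied to `h`
and to its inverse, this gives `attachMap h f` a left homotopy inverse which itself has a left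
homotopy inverse, so `attachMap h f` is a homotopy equivalence.
-/

open Metric

/-- The closed unit ball in `ℝⁿ`. -/
def UnitBall (n : ℕ) : Set (EuclideanSpace ℝ (Fin n)) := Metric.closedBall 0 1

/-- The unit sphere in `ℝⁿ`. -/
def UnitSphere (n : ℕ) : Set (EuclideanSpace ℝ (Fin n)) := Metric.sphere 0 1

/-- The relation on `X ⊕ Bⁿ` generating the adjunction-space identification:
each sphere point `z` is identified with `f z ∈ X`. -/
def attachRel {X : Type*} (n : ℕ) (f : ↥(UnitSphere n) → X) :
    (X ⊕ ↥(UnitBall n)) → (X ⊕ ↥(UnitBall n)) → Prop := fun a b =>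
  ∃ z : ↥(UnitSphere n),
    a = Sum.inr ⟨z.val, Metric.sphere_subset_closedBall z.property⟩ ∧ b = Sum.inl (f z)

/-- The adjunction space `X ∪_f Bⁿ`, obtained by gluing an `n`-cell to `X`
along the attaching map `f : S^{n-1} → X`; it carries the quotient topology. -/
def AttachCell {X : Type*} [TopologicalSpace X] (n : ℕ) (f : ↥(UnitSphere n) → X) :
    Type _ := Quot (attachRel n f)

noncomputable instance {X : Type*} [TopologicalSpace X] (n : ℕ) (f : ↥(UnitSphere n) → X) :
    TopologicalSpace (AttachCell n f) :=
  instTopologicalSpaceQuot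

open Set unitInterval

local notation "E" n => EuclideanSpace ℝ (Fin n)

local notation "clamp" => Set.projIcc (0 : ℝ) 1 zero_le_one

noncomputable section CellAttachment

variable {n : ℕ}

def sphereToBall (z : ↥(UnitSphere n)) : ↥(UnitBall n) :=
  ⟨z, sphere_subset_closedBall z.2⟩

lemma norm_sphere (z : ↥(UnitSphere n)) : ‖(z : E n)‖ = 1 :=
  mem_sphere_zero_iff_norm.mp z.2

lemma norm_ball_le_one (b : ↥(UnitBall n)) : ‖(b : E n)‖ ≤ 1 :=
  mem_closedBall_zero_iff.mp b.2

def sphereDir (x : E n) (hx : x ≠ 0) : ↥(UnitSphere n) :=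
  ⟨‖x‖⁻¹ • x, by
    rw [UnitSphere, mem_sphere_zero_iff_norm, norm_smul, norm_inv, norm_norm,
      inv_mul_cancel₀ (norm_ne_zero_iff.mpr hx)]⟩

lemma continuous_sphereDir {Z : Type*} [TopologicalSpace Z] {v : Z → E n} (hv : Continuous v)
    (hv0 : ∀ z, v z ≠ 0) : Continuous fun z => sphereDir (v z) (hv0 z) :=
  ((continuous_norm.comp hv).inv₀ fun z => norm_ne_zero_iff.mpr (hv0 z)).smul hv |>.subtype_mk _

lemma sphereDir_eq_of_eq_smul {x y : E n} {c : ℝ} (hc : 0 < c) (hxy : y = c • x)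
    (hy : y ≠ 0) (hx : x ≠ 0) : sphereDir y hy = sphereDir x hx := by
  subst hxy
  ext1
  simp only [sphereDir, norm_smul, Real.norm_of_nonneg hc.le, smul_smul]
  congr 1
  field_simp

lemma sphereDir_sphereToBall (z : ↥(UnitSphere n))
    (hz : ((sphereToBall z : ↥(UnitBall n)) : E n) ≠ 0) : sphereDir _ hz = z := by
  ext1
  simp [sphereDir, sphereToBall, norm_sphere z]

/-- The radial map that blows the ball of radius `c` up to the unit ball and
retracts everything outside it onto the unit sphere. -/
def ballScale (c : ℝ) (b : ↥(UnitBall n)) : ↥(UnitBall n) :=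
  ⟨(max c ‖(b : E n)‖)⁻¹ • (b : E n), by
    show _ ∈ closedBall (0 : E n) 1
    rw [mem_closedBall_zero_iff, norm_smul, norm_inv,
      Real.norm_of_nonneg ((norm_nonneg _).trans (le_max_right _ _))]
    rcases (norm_nonneg (b : E n)).eq_or_lt with hb | hb
    · simp [← hb]
    · exact (inv_mul_le_one₀ (hb.trans_le (le_max_right _ _))).mpr (le_max_right _ _)⟩

lemma coe_ballScale_of_norm_le {c : ℝ} {b : ↥(UnitBall n)} (h : ‖(b : E n)‖ ≤ c) :
    (ballScale c b : E n) = c⁻¹ • (b : E n) := by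
  simp [ballScale, max_eq_left h]

lemma norm_ballScale_of_norm_le {c : ℝ} (hc : 0 < c) {b : ↥(UnitBall n)}
    (h : ‖(b : E n)‖ ≤ c) : ‖(ballScale c b : E n)‖ = ‖(b : E n)‖ / c := by
  rw [coe_ballScale_of_norm_le h, norm_smul, norm_inv, Real.norm_of_nonneg hc.le,
    inv_mul_eq_div]

lemma ballScale_ballScale {c d : ℝ} (hc : 0 < c) (hd : d ≤ 1) {b : ↥(UnitBall n)}
    (h : ‖(b : E n)‖ ≤ c * d) : ballScale d (ballScale c b) = ballScale (c * d) b := by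
  have hbc : ‖(b : E n)‖ ≤ c := h.trans (mul_le_of_le_one_right hc.le hd)
  have hd' : ‖(ballScale c b : E n)‖ ≤ d := by
    rw [norm_ballScale_of_norm_le hc hbc, div_le_iff₀' hc]
    exact h
  ext1
  rw [coe_ballScale_of_norm_le hd', coe_ballScale_of_norm_le hbc, coe_ballScale_of_norm_le h,
    smul_smul, mul_inv_rev]

lemma sphereDir_ballScale {c : ℝ} (hc : 0 < c) {b : ↥(UnitBall n)} (h : ‖(b : E n)‖ ≤ c)
    (hcb : (ballScale c b : E n) ≠ 0) (hb : (b : E n) ≠ 0) : sphereDir _ hcb = sphereDir _ hb :=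
  sphereDir_eq_of_eq_smul (inv_pos.mpr hc) (coe_ballScale_of_norm_le h) hcb hb

lemma ballScale_one (b : ↥(UnitBall n)) : ballScale 1 b = b :=
  Subtype.ext <| by simp [coe_ballScale_of_norm_le (norm_ball_le_one b)]

lemma ballScale_eq_sphereToBall {c : ℝ} {b : ↥(UnitBall n)} (hb : ‖(b : E n)‖ = c)
    (hb0 : (b : E n) ≠ 0) : ballScale c b = sphereToBall (sphereDir _ hb0) :=
  Subtype.ext <| by simp [coe_ballScale_of_norm_le hb.le, sphereToBall, sphereDir, hb]

lemma continuous_ballScale {T : Type*} [TopologicalSpace T] {c : T → ℝ} (hc : Continuous c)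
    (hc0 : ∀ t, 0 < c t) : Continuous fun p : T × ↥(UnitBall n) => ballScale (c p.1) p.2 := by
  have hmax : Continuous fun p : T × ↥(UnitBall n) => max (c p.1) ‖(p.2 : E n)‖ := by fun_prop
  refine Continuous.subtype_mk ((hmax.inv₀ ?_).smul (by fun_prop)) _
  exact fun p => ((hc0 p.1).trans_le (le_max_left _ _)).ne'

namespace AttachCell

variable {X Y : Type*} [TopologicalSpace X] [TopologicalSpace Y] {f : ↥(UnitSphere n) → X}

variable (f) in
def inl : C(X, AttachCell n f) :=
  ⟨fun x => Quot.mk _ (Sum.inl x), continuous_quot_mk.comp continuous_inl⟩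

variable (f) in
def inr : C(↥(UnitBall n), AttachCell n f) :=
  ⟨fun b => Quot.mk _ (Sum.inr b), continuous_quot_mk.comp continuous_inr⟩

lemma inr_sphereToBall (z : ↥(UnitSphere n)) : inr f (sphereToBall z) = inl f (f z) :=
  Quot.sound ⟨z, rfl, rfl⟩

lemma hom_ext {φ ψ : C(AttachCell n f, Y)} (hl : ∀ x, φ (inl f x) = ψ (inl f x))
    (hr : ∀ b, φ (inr f b) = ψ (inr f b)) : φ = ψ := by
  ext a
  induction a using Quot.ind with
  | mk w => cases w with
    | inl x => exact hl x
    | inr b => exact hr b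

def desc (g : C(X, Y)) (c : C(↥(UnitBall n), Y))
    (h : ∀ z, c (sphereToBall z) = g (f z)) : C(AttachCell n f, Y) :=
  ⟨Quot.lift (Sum.elim g c) (by rintro _ _ ⟨z, rfl, rfl⟩; exact h z),
    continuous_quot_lift _ (continuous_sumElim.mpr ⟨g.continuous, c.continuous⟩)⟩

/-- Families of maps glue as well, since currying along the locally compact `T` turns them
into maps into `C(T, Y)`. -/
def descFamily {T : Type*} [TopologicalSpace T] [LocallyCompactSpace T] (P : C(T × X, Y))
    (Q : C(T × ↥(UnitBall n), Y)) (h : ∀ t z, Q (t, sphereToBall z) = P (t, f z)) :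
    C(T × AttachCell n f, Y) :=
  (desc (P.comp .prodSwap).curry (Q.comp .prodSwap).curry
    fun z => ContinuousMap.ext fun t => h t z).uncurry.comp .prodSwap

end AttachCell

variable {X X' : Type*} [TopologicalSpace X] [TopologicalSpace X']

open AttachCell

/-- The data of a homotopy `I × (X ∪_f Bⁿ) → X' ∪_{f'} Bⁿ` which at time `s` maps `X` by
`base s`, blows the ball of radius `radius s` up to the whole cell, and sends each point `b`
of the remaining collar `radius s ≤ ‖b‖ ≤ 1` to `collar (s, ‖b‖, b / ‖b‖) ∈ X'`. -/
structure CollarData (f : ↥(UnitSphere n) → X) (f' : ↥(UnitSphere n) → X') where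
  base : C(I × X, X')
  radius : C(I, ℝ)
  radius_pos : ∀ s, 0 < radius s
  radius_le_one : ∀ s, radius s ≤ 1
  collar : C(I × ℝ × ↥(UnitSphere n), X')
  collar_radius : ∀ s z, collar (s, radius s, z) = f' z
  collar_one : ∀ s z, collar (s, 1, z) = base (s, f z)

namespace CollarData

variable {f : ↥(UnitSphere n) → X} {f' : ↥(UnitSphere n) → X'} (D : CollarData f f')

lemma ne_zero_of_radius_le {s : I} {b : ↥(UnitBall n)} (h : D.radius s ≤ ‖(b : E n)‖) :
    (b : E n) ≠ 0 :=
  norm_pos_iff.mp ((D.radius_pos s).trans_le h)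

/-- The value at `b = 0` is junk: the collar avoids the origin. -/
def collarFun (p : I × ↥(UnitBall n)) : AttachCell n f' :=
  if hb : (p.2 : E n) = 0 then inr f' p.2
  else inl f' (D.collar (p.1, ‖(p.2 : E n)‖, sphereDir _ hb))

lemma continuousOn_collarFun :
    ContinuousOn D.collarFun {p | D.radius p.1 ≤ ‖(p.2 : E n)‖} := by
  set S := {p : I × ↥(UnitBall n) | D.radius p.1 ≤ ‖(p.2 : E n)‖}
  rw [continuousOn_iff_continuous_domRestrict]
  have hne (q : S) : ((q : I × ↥(UnitBall n)).2 : E n) ≠ 0 := D.ne_zero_of_radius_le q.2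
  have hv : Continuous fun q : S => ((q : I × ↥(UnitBall n)).2 : E n) := by fun_prop
  have hrestrict : S.domRestrict D.collarFun = fun q : S => inl f' (D.collar
      ((q : I × ↥(UnitBall n)).1, ‖((q : I × ↥(UnitBall n)).2 : E n)‖, sphereDir _ (hne q))) :=
    funext fun q => dif_neg (hne q)
  rw [hrestrict]
  have := continuous_sphereDir hv hne
  fun_prop

lemma inr_ballScale_eq_collarFun {s : I} {b : ↥(UnitBall n)} (h : ‖(b : E n)‖ = D.radius s) :
    inr f' (ballScale (D.radius s) b) = D.collarFun (s, b) := by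
  have hb := D.ne_zero_of_radius_le h.ge
  rw [collarFun, dif_neg hb, ballScale_eq_sphereToBall h hb, inr_sphereToBall, h,
    D.collar_radius]

def cell : C(I × ↥(UnitBall n), AttachCell n f') where
  toFun p := if ‖(p.2 : E n)‖ ≤ D.radius p.1 then inr f' (ballScale (D.radius p.1) p.2)
    else D.collarFun p
  continuous_toFun :=
    continuous_if_le (by fun_prop) (by fun_prop)
      ((inr f').continuous.comp
        (continuous_ballScale D.radius.continuous D.radius_pos)).continuousOn
      D.continuousOn_collarFun fun _ => D.inr_ballScale_eq_collarFun

lemma cell_of_le {s : I} {b : ↥(UnitBall n)} (h : ‖(b : E n)‖ ≤ D.radius s) :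
    D.cell (s, b) = inr f' (ballScale (D.radius s) b) :=
  if_pos h

lemma cell_of_ge {s : I} {b : ↥(UnitBall n)} (h : D.radius s ≤ ‖(b : E n)‖) :
    D.cell (s, b) =
      inl f' (D.collar (s, ‖(b : E n)‖, sphereDir _ (D.ne_zero_of_radius_le h))) := by
  have hcollar : D.cell (s, b) = D.collarFun (s, b) := by
    rcases h.lt_or_eq with h | h
    · exact if_neg h.not_ge
    · exact (D.cell_of_le h.ge).trans (D.inr_ballScale_eq_collarFun h.symm)
  rw [hcollar, collarFun, dif_neg]

def toFamily : C(I × AttachCell n f, AttachCell n f') :=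
  descFamily ((inl f').comp D.base) D.cell fun s z => by
    have hz : ‖((sphereToBall z : ↥(UnitBall n)) : E n)‖ = 1 := norm_sphere z
    rw [D.cell_of_ge (hz ▸ D.radius_le_one s), sphereDir_sphereToBall, hz, D.collar_one]
    rfl

def mapAt (s : I) : C(AttachCell n f, AttachCell n f') := D.toFamily.curry s

lemma mapAt_inl (s : I) (x : X) : D.mapAt s (inl f x) = inl f' (D.base (s, x)) := rfl

lemma mapAt_inr (s : I) (b : ↥(UnitBall n)) : D.mapAt s (inr f b) = D.cell (s, b) := rfl

lemma homotopic_mapAt : (D.mapAt 0).Homotopic (D.mapAt 1) :=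
  ⟨⟨D.toFamily, fun _ => rfl, fun _ => rfl⟩⟩

lemma mapAt_eq_id {D : CollarData f f} {s : I} (hr : D.radius s = 1)
    (hb : ∀ x, D.base (s, x) = x) : D.mapAt s = ContinuousMap.id _ := by
  refine hom_ext (fun x => by rw [mapAt_inl, hb]; rfl) fun b => ?_
  rw [mapAt_inr, D.cell_of_le (hr ▸ norm_ball_le_one b), hr, ballScale_one]
  rfl

end CollarData

variable {Y : Type*} [TopologicalSpace Y]

def attachMap (k : C(X, Y)) (f : C(↥(UnitSphere n), X)) :
    C(AttachCell n ⇑f, AttachCell n ⇑(k.comp f)) :=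
  desc ((inl _).comp k) (inr _) inr_sphereToBall

/-- Shrinks the cell to radius `1/2` and fills the collar with `J`, from `f₀` on the unit
sphere to `f₁` at radius `1/2`. -/
def collarData {f₀ f₁ : C(↥(UnitSphere n), X)} (J : f₀.Homotopy f₁) :
    CollarData ⇑f₀ ⇑f₁ where
  base := .snd
  radius := .const _ (1 / 2)
  radius_pos _ := by norm_num
  radius_le_one _ := by norm_num
  collar := ⟨fun p => J (clamp (2 - 2 * p.2.1), p.2.2), by fun_prop⟩
  collar_radius s z := by norm_num
  collar_one s z := by norm_num

def collarMap {f₀ f₁ : C(↥(UnitSphere n), X)} (J : f₀.Homotopy f₁) :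
    C(AttachCell n ⇑f₀, AttachCell n ⇑f₁) :=
  (collarData J).mapAt 0

lemma collarMap_inl {f₀ f₁ : C(↥(UnitSphere n), X)} (J : f₀.Homotopy f₁) (x : X) :
    collarMap J (inl _ x) = inl _ x := rfl

lemma collarMap_inr_of_le {f₀ f₁ : C(↥(UnitSphere n), X)} (J : f₀.Homotopy f₁)
    {b : ↥(UnitBall n)} (h : ‖(b : E n)‖ ≤ 1 / 2) :
    collarMap J (inr _ b) = inr _ (ballScale (1 / 2) b) :=
  (collarData J).cell_of_le h

lemma collarMap_inr_of_ge {f₀ f₁ : C(↥(UnitSphere n), X)} (J : f₀.Homotopy f₁)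
    {b : ↥(UnitBall n)} (h : 1 / 2 ≤ ‖(b : E n)‖) (hb : (b : E n) ≠ 0) :
    collarMap J (inr _ b) = inl _ (J (clamp (2 - 2 * ‖(b : E n)‖), sphereDir _ hb)) :=
  (collarData J).cell_of_ge h

theorem collarMap_comp_attachMap_homotopic_id {k : C(X, Y)} {k' : C(Y, X)}
    (H : (k'.comp k).Homotopy (.id X)) (f : C(↥(UnitSphere n), X)) :
    ((collarMap (H.compContinuousMap f)).comp
      ((attachMap k' (k.comp f)).comp (attachMap k f))).Homotopic (.id (AttachCell n ⇑f)) := by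
  -- At time `s` the cell is blown up from radius `(1 + s) / 2` and the collar runs along `H`
  -- from time `s` on.
  let D : CollarData ⇑f ⇑f :=
    { base := H.toContinuousMap
      radius := ⟨fun s => (1 + s) / 2, by fun_prop⟩
      radius_pos s := by have := s.2.1; dsimp; linarith
      radius_le_one s := by have := s.2.2; dsimp; linarith
      collar := ⟨fun p => H (clamp (2 + p.1 - 2 * p.2.1), f p.2.2), by fun_prop⟩
      collar_radius s z := by
        dsimp
        rw [show 2 + (s : ℝ) - 2 * ((1 + s) / 2) = 1 by ring]
        simp
      collar_one s z := by norm_num }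
  have h0 : D.mapAt 0 =
      (collarMap (H.compContinuousMap f)).comp
        ((attachMap k' (k.comp f)).comp (attachMap k f)) := by
    refine hom_ext (fun x => congrArg (inl _) (H.apply_zero x)) fun b => ?_
    have hr : D.radius 0 = 1 / 2 := by norm_num [D]
    change D.cell (0, b) = collarMap (H.compContinuousMap f) (inr _ b)
    rcases le_total ‖(b : E n)‖ (1 / 2) with hb | hb
    · rw [D.cell_of_le (hr ▸ hb), collarMap_inr_of_le _ hb, hr]
      rfl
    · rw [D.cell_of_ge (hr ▸ hb), collarMap_inr_of_ge _ hb (D.ne_zero_of_radius_le (hr ▸ hb))]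
      norm_num [D]
      rfl
  have h1 : D.mapAt 1 = .id _ := CollarData.mapAt_eq_id (by norm_num [D]) H.apply_one
  exact h0 ▸ h1 ▸ D.homotopic_mapAt

theorem collarMap_symm_comp_collarMap_homotopic_id {f₀ f₁ : C(↥(UnitSphere n), X)}
    (J : f₀.Homotopy f₁) :
    ((collarMap J.symm).comp (collarMap J)).Homotopic (.id (AttachCell n ⇑f₀)) := by
  -- Along the collar the composite runs through `J` and back; at time `s` it turns back at
  -- time `1 - s` of `J`, while the inner radius grows from `1/4` to `1`.
  let D : CollarData ⇑f₀ ⇑f₀ :=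
    { base := .snd
      radius := ⟨fun s => (1 + 3 * s) / 4, by fun_prop⟩
      radius_pos s := by have := s.2.1; dsimp; linarith
      radius_le_one s := by have := s.2.2; dsimp; linarith
      collar := ⟨fun p => J (clamp (min (min (4 * p.2.1 - 1 - 3 * p.1) (2 - 2 * p.2.1))
        (1 - p.1)), p.2.2), by fun_prop⟩
      collar_radius s z := by
        dsimp only [ContinuousMap.coe_mk]
        convert J.apply_zero z using 3
        exact projIcc_of_le_left _ ((min_le_left _ _).trans ((min_le_left _ _).trans_eq (by ring)))
      collar_one s z := by
        dsimp only [ContinuousMap.coe_mk]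
        convert J.apply_zero z using 3
        exact projIcc_of_le_left _ ((min_le_left _ _).trans ((min_le_right _ _).trans_eq (by ring)))
        rfl }
  have hr : D.radius 0 = 1 / 4 := by norm_num [D]
  have hcollar (r : ℝ) (z : ↥(UnitSphere n)) :
      D.collar (0, r, z) = J (clamp (min (min (4 * r - 1) (2 - 2 * r)) 1), z) := by
    norm_num [D]
  have h0 : D.mapAt 0 = (collarMap J.symm).comp (collarMap J) := by
    refine hom_ext (fun x => rfl) fun b => ?_
    rw [ContinuousMap.comp_apply, D.mapAt_inr]
    rcases le_total ‖(b : E n)‖ (1 / 2) with hb | hb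
    · rw [collarMap_inr_of_le _ hb]
      rcases le_total ‖(b : E n)‖ (1 / 4) with hb' | hb'
      · have hb2 : ‖(ballScale (1 / 2) b : E n)‖ ≤ 1 / 2 := by
          rw [norm_ballScale_of_norm_le (by norm_num) hb]
          linarith
        rw [D.cell_of_le (hr ▸ hb'), collarMap_inr_of_le _ hb2,
          ballScale_ballScale (by norm_num) (by norm_num) (by linarith), hr]
        norm_num
      · have hb0 := D.ne_zero_of_radius_le (hr ▸ hb')
        have hnorm := norm_ballScale_of_norm_le (by norm_num : (0 : ℝ) < 1 / 2) hb
        have hb0' : (ballScale (1 / 2) b : E n) ≠ 0 := by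
          rw [← norm_pos_iff, hnorm]
          linarith
        rw [D.cell_of_ge (hr ▸ hb'), collarMap_inr_of_ge _ (by linarith) hb0',
          sphereDir_ballScale (by norm_num) hb hb0' hb0, ContinuousMap.Homotopy.symm_apply,
          symm_projIcc, hnorm, hcollar]
        congr 4
        simp only [min_def]
        split_ifs <;> linarith
    · have hb0 : (b : E n) ≠ 0 := D.ne_zero_of_radius_le (by linarith)
      rw [collarMap_inr_of_ge _ hb hb0, collarMap_inl, D.cell_of_ge (by linarith), hcollar]
      congr 4
      simp only [min_def]
      split_ifs <;> linarith
  have h1 : D.mapAt 1 = .id _ := CollarData.mapAt_eq_id (by norm_num [D]) fun _ => rfl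
  exact h0 ▸ h1 ▸ D.homotopic_mapAt

/-- `f ≃ l ∘ g ∘ f ≃ l`, so `g` is a right homotopy inverse of `f` as well. -/
def ContinuousMap.HomotopyEquiv.ofLeftInverses {X Y : Type*} [TopologicalSpace X]
    [TopologicalSpace Y] {f : C(X, Y)} {g : C(Y, X)} {l : C(X, Y)}
    (hgf : (g.comp f).Homotopic (.id X)) (hlg : (l.comp g).Homotopic (.id Y)) :
    ContinuousMap.HomotopyEquiv X Y where
  toFun := f
  invFun := g
  left_inv := hgf
  right_inv :=
    have hfl : f.Homotopic l :=
      (hlg.comp (.refl f)).symm.trans ((ContinuousMap.Homotopic.refl l).comp hgf)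
    (hfl.comp (.refl g)).trans hlg

def homotopyEquivAttachCell (h : ContinuousMap.HomotopyEquiv X Y)
    (f : C(↥(UnitSphere n), X)) :
    ContinuousMap.HomotopyEquiv (AttachCell n ⇑f) (AttachCell n ⇑(h.toFun.comp f)) :=
  let H := h.left_inv.some.compContinuousMap f
  let G := h.right_inv.some.compContinuousMap (h.toFun.comp f)
  let back := attachMap h.invFun (h.toFun.comp f)
  let forth := attachMap h.toFun (h.invFun.comp (h.toFun.comp f))
  .ofLeftInverses (f := attachMap h.toFun f) (g := (collarMap H).comp back)
    (l := (collarMap G).comp (forth.comp (collarMap H.symm)))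
    (collarMap_comp_attachMap_homotopic_id _ f)
    (((ContinuousMap.Homotopic.refl ((collarMap G).comp forth)).comp
      ((collarMap_symm_comp_collarMap_homotopic_id H).comp (.refl back))).trans
        (collarMap_comp_attachMap_homotopic_id _ _))

end CellAttachment

/-- If `h : X₁ → X₂` is a homotopy equivalence and
`f₁ : S^{n-1} → X₁`, `f₂ : S^{n-1} → X₂` are continuous with `f₂ = h ∘ f₁`, then the
adjunction spaces `X₁ ∪_{f₁} Bⁿ` and `X₂ ∪_{f₂} Bⁿ` are homotopy equivalent. -/
theorem attachCell_homotopyEquiv {X₁ X₂ : Type*} [TopologicalSpace X₁]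
    [TopologicalSpace X₂] (n : ℕ)
    (h : ContinuousMap.HomotopyEquiv X₁ X₂)
    (f₁ : C(↥(UnitSphere n), X₁)) (f₂ : C(↥(UnitSphere n), X₂))
    (hcomp : ∀ z, f₂ z = h.toFun (f₁ z)) :
    Nonempty (ContinuousMap.HomotopyEquiv (AttachCell n ⇑f₁) (AttachCell n ⇑f₂)) := by
  obtain rfl : f₂ = h.toFun.comp f₁ := ContinuousMap.ext hcomp
  exact ⟨homotopyEquivAttachCell h f₁⟩
end
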